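/- A 4-digit (σ,k)-permutiple [a_0; a_1, a_2, a_3] is symmetric if and only if it is perfect or its permuted digit string is the reversal of its digit string, i.e., a_{σ(j)} = a_{3−j} for all 0 ≤ j ≤ 3 (so that it is a k-reverse multiple). -/

import Mathlib

/-- Value of the finite simple continued fraction `[x₀; x₁, …, xₙ]`. -/
def cfv : List ℚ → ℚ
  | [] => 0
  | [x] => x
  | x :: y :: t => x + 1 / cfv (y :: t)

/-- The continuant `K(x₀, …, xₙ)`: `K() = 1`, `K(x₀) = x₀`, and the usual
three-term recurrence. -/
def cont : List ℕ → ℕ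
  | [] => 1
  | [x] => x
  | x :: y :: t => x * cont (y :: t) + cont t

/-- The digit string of `a`, as a list of rationals. -/
def digitsQ {N : ℕ} (a : Fin N → ℕ) : List ℚ := (List.ofFn a).map (fun x => (x : ℚ))

/-- `[a₀; a₁, …, aₙ]` (canonical: positive digits, last digit ≥ 2) is a
`(σ,k)`-permutiple: it equals `k` times the continued fraction of the permuted digits. -/
def IsPermutiple {n : ℕ} (a : Fin (n+1) → ℕ) (σ : Equiv.Perm (Fin (n+1))) (k : ℕ) : Prop :=
  (∀ j, 0 < a j) ∧ 2 ≤ a (Fin.last n) ∧ 1 < k ∧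
    cfv (digitsQ a) = k * cfv (digitsQ (a ∘ σ))

/-- A `(σ,k)`-permutiple is continuant-preserving if
`K(a₀,…,aₙ) = K(a_{σ(0)},…,a_{σ(n)})`. -/
def ContinuantPreserving {n : ℕ} (a : Fin (n+1) → ℕ) (σ : Equiv.Perm (Fin (n+1))) : Prop :=
  cont (List.ofFn a) = cont (List.ofFn (a ∘ σ))

/-- A `(σ,k)`-permutiple is perfect if `a_j = k·a_{σ(j)}` for even `j` and
`a_{σ(j)} = k·a_j` for odd `j`. -/
def IsPerfect {n : ℕ} (a : Fin (n+1) → ℕ) (σ : Equiv.Perm (Fin (n+1))) (k : ℕ) : Prop :=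
  ∀ j : Fin (n+1), (Even (j : ℕ) → a j = k * a (σ j)) ∧ (Odd (j : ℕ) → a (σ j) = k * a j)

/-- A `(σ,k)`-permutiple is symmetric if `a_j·a_{n−j} = a_{σ(j)}·a_{σ(n−j)}` for all `j`. -/
def IsSymmetric {n : ℕ} (a : Fin (n+1) → ℕ) (σ : Equiv.Perm (Fin (n+1))) : Prop :=
  ∀ j : Fin (n+1), a j * a j.rev = a (σ j) * a (σ j.rev)

/-- A Landess permutiple: a continuant-preserving `(σ,k)`-permutiple with
`q_{n−1} = q'_{n−1}` and `p_{n−1} = k·p'_{n−1}`. -/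
def IsLandess {n : ℕ} (a : Fin (n+1) → ℕ) (σ : Equiv.Perm (Fin (n+1))) (k : ℕ) : Prop :=
  IsPermutiple a σ k ∧ ContinuantPreserving a σ ∧
    cont ((List.ofFn a).tail.dropLast) = cont ((List.ofFn (a ∘ σ)).tail.dropLast) ∧
    cont ((List.ofFn a).dropLast) = k * cont ((List.ofFn (a ∘ σ)).dropLast)

/-
Write `[a₀; a₁, …, aₙ] = P / Q` and `[a_{σ(0)}; …, a_{σ(n)}] = P' / Q'` with continuants
`P = K(a₀, …, aₙ)`, `Q = K(a₁, …, aₙ)`. Consecutive continuants are coprime, so `P Q' = k P' Q`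
forces `Q' = d Q` and `P = e P'` with `d e = k`; comparing `P = a₀ Q + K(a₂, …)` with
`P' = a_{σ(0)} Q' + …` gives moreover `k a_{σ(0)} ≤ a₀`.

For four digits the symmetry conditions `a₀ a₃ = a_{σ(0)} a_{σ(3)}` and
`a₁ a₂ = a_{σ(1)} a_{σ(2)}` leave, up to equal digits, six permuted strings: the reversal,
`[a₃; a₁, a₂, a₀]`, and four strings for which `a₀ a₃ = a₁ a₂`. For each of the last five, the
two continuant equations are polynomial identities in the digits. Writing
`a₀ = k a_{σ(0)} + m`, a size comparison in `Q' = d Q` rules out `e ≥ 2`; with `e = 1` what is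
left is `Q' = k Q` and `m Q + K(a₂, a₃) = K(a_{σ(2)}, a_{σ(3)})`, from which either `m = 0` and
the string is perfect, or `a₁ = a₂` and it is the reversal, or there is no solution.
Conversely, perfect permutiples with `n` odd and reverse multiples are symmetric.
-/

theorem cont_pos : ∀ {l : List ℕ}, (∀ x ∈ l, 0 < x) → 0 < cont l
  | [], _ => Nat.one_pos
  | [x], h => by simpa [cont] using h
  | x :: y :: t, h => by
    have hx : 0 < x := h x (by simp)
    have hyt : 0 < cont (y :: t) := cont_pos fun z hz => h z (List.mem_cons_of_mem x hz)
    simp only [cont]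
    positivity

theorem coprime_cont_cont_tail : ∀ l : List ℕ, (cont l).Coprime (cont l.tail)
  | [] => Nat.coprime_one_left 1
  | [x] => Nat.coprime_one_right x
  | x :: y :: t => by
    simp only [cont, List.tail_cons]
    rw [Nat.coprime_mul_right_add_left]
    exact (coprime_cont_cont_tail (y :: t)).symm

theorem cfv_map_natCast : ∀ {l : List ℕ}, l ≠ [] → (∀ x ∈ l, 0 < x) →
    cfv (l.map (↑)) = cont l / cont l.tail
  | [x], _, _ => by simp [cfv, cont]
  | x :: y :: t, _, h => by
    have hyt : (cont (y :: t) : ℚ) ≠ 0 :=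
      Nat.cast_ne_zero.mpr (cont_pos fun z hz => h z (List.mem_cons_of_mem x hz)).ne'
    rw [List.map_cons, List.map_cons, cfv, ← List.map_cons,
      cfv_map_natCast (List.cons_ne_nil y t) fun z hz => h z (List.mem_cons_of_mem x hz)]
    simp only [cont, List.tail_cons, Nat.cast_add, Nat.cast_mul]
    field_simp

/-- `digitsQ` elaborates its cast through the list monad; this restores a plain `List.map`. -/
theorem digitsQ_eq_map {N : ℕ} (a : Fin N → ℕ) : digitsQ a = (List.ofFn a).map (↑) := by
  simp only [digitsQ, List.map_id']
  exact List.flatMap_pure_eq_map _ _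

theorem exists_mul_eq_of_mul_eq_mul_of_coprime {p q p' q' k : ℕ} (hq : 0 < q) (hp' : 0 < p')
    (hpq : p.Coprime q) (hpq' : p'.Coprime q') (h : p * q' = k * p' * q) :
    ∃ d e, d * e = k ∧ q' = d * q ∧ p = e * p' := by
  obtain ⟨d, rfl⟩ : q ∣ q' := hpq.symm.dvd_of_dvd_mul_left ⟨k * p', by rw [h]; ring⟩
  have hpd : p * d = k * p' := by
    apply Nat.eq_of_mul_eq_mul_left hq
    linear_combination h
  obtain ⟨e, rfl⟩ : p' ∣ p :=
    (hpq'.coprime_mul_left_right).dvd_of_dvd_mul_right ⟨k, by rw [hpd]; ring⟩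
  refine ⟨d, e, ?_, by ring, by ring⟩
  apply Nat.eq_of_mul_eq_mul_left hp'
  linear_combination hpd

theorem IsPermutiple.exists_cont_factor {n : ℕ} {a : Fin (n + 1) → ℕ}
    {σ : Equiv.Perm (Fin (n + 1))} {k : ℕ} (h : IsPermutiple a σ k) :
    ∃ d e, d * e = k ∧ cont (List.ofFn (a ∘ σ)).tail = d * cont (List.ofFn a).tail ∧
      cont (List.ofFn a) = e * cont (List.ofFn (a ∘ σ)) := by
  obtain ⟨hpos, -, -, hcf⟩ := h
  have hposσ : ∀ x ∈ List.ofFn (a ∘ σ), 0 < x := by simp [List.mem_ofFn, hpos]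
  have hposa : ∀ x ∈ List.ofFn a, 0 < x := by simp [List.mem_ofFn, hpos]
  have htail {b : Fin (n + 1) → ℕ} (hb : ∀ x ∈ List.ofFn b, 0 < x) :
      0 < cont (List.ofFn b).tail :=
    cont_pos fun x hx => hb x (List.mem_of_mem_tail hx)
  refine exists_mul_eq_of_mul_eq_mul_of_coprime (htail hposa) (cont_pos hposσ)
    (coprime_cont_cont_tail _) (coprime_cont_cont_tail _) ?_
  have hQ : (cont (List.ofFn a).tail : ℚ) ≠ 0 := by exact_mod_cast (htail hposa).ne'
  have hQ' : (cont (List.ofFn (a ∘ σ)).tail : ℚ) ≠ 0 := by exact_mod_cast (htail hposσ).ne'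
  rw [digitsQ_eq_map, digitsQ_eq_map, cfv_map_natCast (by simp) hposa,
    cfv_map_natCast (by simp) hposσ] at hcf
  field_simp at hcf
  qify
  linear_combination hcf

theorem IsPerfect.isSymmetric {n : ℕ} {a : Fin (n + 1) → ℕ} {σ : Equiv.Perm (Fin (n + 1))}
    {k : ℕ} (h : IsPerfect a σ k) (hn : Odd n) : IsSymmetric a σ := by
  intro j
  have hrev : (j.rev : ℕ) = n - j := by rw [Fin.val_rev]; omega
  rcases Nat.even_or_odd (j : ℕ) with hj | hj
  · have hj' : Odd (j.rev : ℕ) := by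
      rw [hrev]; exact Nat.Odd.sub_even (by omega) hn hj
    rw [(h j).1 hj, (h j.rev).2 hj']
    ring
  · have hj' : Even (j.rev : ℕ) := by
      rw [hrev]; exact Nat.Odd.sub_odd hn hj
    rw [(h j).2 hj, (h j.rev).1 hj']
    ring

theorem isSymmetric_of_apply_eq_rev {n : ℕ} {a : Fin (n + 1) → ℕ}
    {σ : Equiv.Perm (Fin (n + 1))} (h : ∀ j, a (σ j) = a j.rev) : IsSymmetric a σ := by
  intro j
  rw [h, h, Fin.rev_rev, mul_comm]

theorem mul_head_le_of_cont_eq {a0 a1 a2 a3 b0 b1 b2 b3 d e : ℕ} (ha1 : 0 < a1) (ha3 : 0 < a3)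
    (hQ : cont [b1, b2, b3] = d * cont [a1, a2, a3])
    (hP : cont [a0, a1, a2, a3] = e * cont [b0, b1, b2, b3]) : d * e * b0 ≤ a0 := by
  simp only [cont] at hQ hP
  by_contra h
  have h' : a0 + 1 ≤ d * e * b0 := by omega
  nlinarith [congrArg (e * b0 * ·) hQ, Nat.mul_le_mul_right (a1 * (a2 * a3 + 1) + a3) h',
    Nat.le_mul_of_pos_left (a2 * a3 + 1) ha1, Nat.zero_le (e * (b2 * b3 + 1))]

theorem two_le_of_two_le_mul_of_ne_one {d e : ℕ} (hk : 2 ≤ d * e) (he : e ≠ 1) : 2 ≤ e := by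
  rcases e with _ | _ | e <;> simp_all

/- In the next five lemmas `a0 a1 a2 a3` are the digits, `hQ` and `hP` are the continuant
equations of `IsPermutiple.exists_cont_factor` for `k = d * e`, and `permutipleIJKL` refers to
the permuted string `[aI; aJ, aK, aL]`. -/

theorem permutiple3120_middle_eq {a0 a1 a2 a3 d e : ℕ} (ha1 : 0 < a1) (ha2 : 0 < a2)
    (ha3 : 0 < a3) (hk : 2 ≤ d * e) (hhead : d * e * a3 ≤ a0)
    (hQ : cont [a1, a2, a0] = d * cont [a1, a2, a3])
    (hP : cont [a0, a1, a2, a3] = e * cont [a3, a1, a2, a0]) : a1 = a2 := by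
  simp only [cont] at hQ hP
  obtain ⟨m, rfl⟩ : ∃ m, a0 = d * e * a3 + m := ⟨a0 - d * e * a3, by omega⟩
  obtain rfl : e = 1 := by
    by_contra he
    have he2 := two_le_of_two_le_mul_of_ne_one hk he
    nlinarith [Nat.mul_le_mul_left (d * a3) he2, Nat.mul_le_mul_left (d * a1 * a2 * a3) he2,
      Nat.mul_le_mul_left (d * a1) (Nat.one_le_iff_ne_zero.mpr (mul_pos ha2 ha3).ne'),
      Nat.zero_le (a1 * a2 * m)]
  have hi : m * (a1 * a2 + 1) + a1 = d * a1 := by linear_combination hQ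
  have hii : m * (a1 * (a2 * a3 + 1) + a3) + a2 * a3 = d * a2 * a3 + m * a2 := by
    linear_combination hP + a3 * hQ
  have hm : 0 < m := Nat.pos_of_ne_zero (by rintro rfl; nlinarith)
  refine Nat.eq_of_mul_eq_mul_left (Nat.mul_pos hm (by positivity : 0 < a1 * (a2 * a3 + 1) + a3)) ?_
  linear_combination a1 * hii - a2 * a3 * hi

theorem permutiple1032_perfect {a0 a1 a2 a3 d e : ℕ} (ha1 : 0 < a1) (ha2 : 0 < a2)
    (ha3 : 0 < a3) (hk : 2 ≤ d * e) (hhead : d * e * a1 ≤ a0) (hS : a0 * a3 = a1 * a2)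
    (hQ : cont [a0, a3, a2] = d * cont [a1, a2, a3])
    (hP : cont [a0, a1, a2, a3] = e * cont [a1, a0, a3, a2]) :
    a0 = d * e * a1 ∧ a2 = d * e * a3 := by
  simp only [cont] at hQ hP
  obtain ⟨m, rfl⟩ : ∃ m, a0 = d * e * a1 + m := ⟨a0 - d * e * a1, by omega⟩
  obtain rfl : e = 1 := by
    by_contra he
    have h3 : a3 ≤ a1 * (a2 * a3 + 1) := by
      nlinarith [Nat.mul_le_mul_right a3 ha2, Nat.mul_le_mul_right (a2 * a3 + 1) ha1]
    nlinarith [Nat.mul_le_mul_left (d * a1 * (a2 * a3 + 1)) (two_le_of_two_le_mul_of_ne_one hk he),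
      Nat.mul_le_mul_left d h3, Nat.zero_le (m * (a3 * a2 + 1))]
  obtain rfl : m = 0 := by
    have hm : m * (a1 * (a2 * a3 + 1) + a3) = 0 := by linear_combination hP + a1 * hQ
    simpa [ha3.ne'] using hm
  refine ⟨by ring, ?_⟩
  apply Nat.eq_of_mul_eq_mul_left ha1
  linear_combination hS.symm

theorem permutiple1302_perfect {a0 a1 a2 a3 d e : ℕ} (ha1 : 0 < a1) (ha2 : 0 < a2)
    (ha3 : 0 < a3) (hk : 2 ≤ d * e) (hhead : d * e * a1 ≤ a0) (hS : a0 * a3 = a1 * a2)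
    (hQ : cont [a3, a0, a2] = d * cont [a1, a2, a3])
    (hP : cont [a0, a1, a2, a3] = e * cont [a1, a3, a0, a2]) :
    a0 = d * e * a1 ∧ a3 = d * e * a1 ∧ a2 = d * e * a0 ∧ a2 = d * e * a3 := by
  simp only [cont] at hQ hP
  obtain ⟨m, rfl⟩ : ∃ m, a0 = d * e * a1 + m := ⟨a0 - d * e * a1, by omega⟩
  obtain rfl : e = 1 := by
    by_contra he
    have he2 := two_le_of_two_le_mul_of_ne_one hk he
    have h2 : 2 * d * a3 ≤ a2 := by
      refine Nat.le_of_mul_le_mul_left ?_ ha1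
      nlinarith [Nat.mul_le_mul_left (d * a1 * a3) he2]
    have hd : 0 < d := Nat.pos_of_mul_pos_right (by omega : 0 < d * e)
    have h3 : d * a1 + d * a3 ≤ d * a1 * a2 * a3 := by
      have ha2' : 2 ≤ a2 := le_trans (by nlinarith) h2
      nlinarith [Nat.mul_le_mul_left (d * a1 * a3) ha2', Nat.mul_le_mul_left (d * a1) ha3,
        Nat.mul_le_mul_left (d * a3) ha1]
    nlinarith [Nat.mul_le_mul_left (d * a1 * a2 * a3) he2, Nat.zero_le (m * a2 * a3)]
  have hi : m * a2 * a3 + a2 + a3 = d * a1 + d * a3 := by linear_combination hQ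
  rcases Nat.eq_zero_or_pos m with rfl | hm
  · have h2 : a2 = d * a3 := by
      apply Nat.eq_of_mul_eq_mul_left ha1
      linear_combination hS.symm
    subst h2
    have h3 : a3 = d * a1 := by linear_combination hi
    subst h3
    refine ⟨by ring, by ring, by ring, by ring⟩
  · exfalso
    obtain ⟨u, rfl⟩ : ∃ u, a2 = d * a3 + u := by
      refine ⟨a2 - d * a3, (Nat.add_sub_of_le ?_).symm⟩
      refine Nat.le_of_mul_le_mul_left ?_ ha1
      nlinarith
    have hu : a1 * u = m * a3 := by linear_combination hS.symm
    have key : u * (m * (d * a3 + u) * a3 + u + a3) = d * m * a3 := by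
      linear_combination u * hi + d * hu
    have hu1 : 1 ≤ u := Nat.pos_of_ne_zero (by rintro rfl; simp at hu; omega)
    have hX : d * m * a3 ≤ m * (d * a3 + u) * a3 :=
      calc d * m * a3 ≤ d * m * a3 * a3 := Nat.le_mul_of_pos_right _ ha3
        _ ≤ m * (d * a3 + u) * a3 := by nlinarith [Nat.zero_le (m * u * a3)]
    nlinarith [Nat.mul_le_mul_right (m * (d * a3 + u) * a3) hu1, Nat.mul_pos hu1 ha3]

theorem permutiple2031_perfect {a0 a1 a2 a3 d e : ℕ} (ha1 : 0 < a1) (ha2 : 0 < a2)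
    (ha3 : 0 < a3) (hk : 2 ≤ d * e) (hhead : d * e * a2 ≤ a0) (hS : a0 * a3 = a1 * a2)
    (hQ : cont [a0, a3, a1] = d * cont [a1, a2, a3])
    (hP : cont [a0, a1, a2, a3] = e * cont [a2, a0, a3, a1]) :
    a0 = d * e * a2 ∧ a0 = d * e * a1 ∧ a2 = d * e * a3 ∧ a1 = d * e * a3 := by
  simp only [cont] at hQ hP
  obtain ⟨m, rfl⟩ : ∃ m, a0 = d * e * a2 + m := ⟨a0 - d * e * a2, by omega⟩
  obtain rfl : e = 1 := by
    by_contra he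
    have he2 := two_le_of_two_le_mul_of_ne_one hk he
    have h13 : a1 + a3 ≤ a1 * a3 + 1 := by nlinarith
    nlinarith [Nat.mul_le_mul_left (d * a2 * (a3 * a1 + 1)) he2, Nat.zero_le (m * (a3 * a1 + 1)),
      Nat.mul_le_mul_left (d * a1 * a3) ha2, Nat.mul_le_mul_left d h13, Nat.mul_le_mul_left d ha2]
  have hR : m * (a1 * (a2 * a3 + 1) + a3) + a2 * a3 = a1 * a3 := by
    linear_combination hP + a2 * hQ
  obtain rfl : m = 0 := by
    by_contra hm
    nlinarith [Nat.mul_le_mul_right (a1 * (a2 * a3 + 1) + a3) (Nat.one_le_iff_ne_zero.mpr hm),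
      Nat.mul_le_mul_left (a1 * a3) ha2]
  obtain rfl : a1 = a2 := by
    apply Nat.eq_of_mul_eq_mul_right ha3
    linarith
  have h : a1 = d * a3 := by
    apply Nat.eq_of_mul_eq_mul_left ha1
    linear_combination hS.symm
  subst h
  refine ⟨by ring, by ring, by ring, by ring⟩

theorem not_permutiple2301 {a0 a1 a2 a3 d e : ℕ} (ha1 : 0 < a1) (ha2 : 0 < a2)
    (ha3 : 0 < a3) (hk : 2 ≤ d * e) (hhead : d * e * a2 ≤ a0) (hS : a0 * a3 = a1 * a2)
    (hQ : cont [a3, a0, a1] = d * cont [a1, a2, a3])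
    (hP : cont [a0, a1, a2, a3] = e * cont [a2, a3, a0, a1]) : False := by
  simp only [cont] at hQ hP
  obtain ⟨m, rfl⟩ : ∃ m, a0 = d * e * a2 + m := ⟨a0 - d * e * a2, by omega⟩
  obtain rfl : e = 1 := by
    by_contra he
    have he2 := two_le_of_two_le_mul_of_ne_one hk he
    have h1 : 2 * d * a3 ≤ a1 := by
      refine Nat.le_of_mul_le_mul_left ?_ ha2
      nlinarith [Nat.mul_le_mul_left (d * a2 * a3) he2]
    have h13 : a1 + a3 ≤ a1 * a3 + 1 := by nlinarith
    nlinarith [Nat.mul_le_mul_left (d * a1 * a2 * a3) he2, Nat.zero_le (m * a1 * a3),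
      Nat.mul_le_mul_left (d * a1 * a3) ha2, Nat.mul_le_mul_left d h13,
      Nat.mul_le_mul_left (2 * d) ha3]
  have hi : m * a1 * a3 + a1 + a3 = d * a1 + d * a3 := by linear_combination hQ
  have hR : m * (a1 * a2 * a3 + a3) + a2 * a3 = d * a1 * a2 := by
    linear_combination hP + a2 * hQ
  rcases Nat.eq_zero_or_pos m with rfl | hm
  · nlinarith
  have h1 : d * a3 < a1 := by
    by_contra h
    nlinarith [Nat.mul_le_mul_right a2 (not_lt.mp h), Nat.mul_pos hm ha3]
  have h2 : m * a3 < d := by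
    by_contra h
    nlinarith [Nat.mul_le_mul_right a1 (not_lt.mp h)]
  nlinarith [Nat.mul_le_mul_right (a1 * a2) h2, Nat.mul_le_mul_right a2 h1]

theorem IsSymmetric.fin_four_cases {a : Fin 4 → ℕ} {σ : Equiv.Perm (Fin 4)}
    (hpos : ∀ j, 0 < a j) (hsym : IsSymmetric (n := 3) a σ) (hlt : a (σ 0) < a 0) :
    (a (σ 0) = a 3 ∧ a (σ 1) = a 2 ∧ a (σ 2) = a 1 ∧ a (σ 3) = a 0) ∨
    (a (σ 0) = a 3 ∧ a (σ 1) = a 1 ∧ a (σ 2) = a 2 ∧ a (σ 3) = a 0) ∨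
    (a 0 * a 3 = a 1 * a 2 ∧
      ((a (σ 0) = a 1 ∧ a (σ 1) = a 0 ∧ a (σ 2) = a 3 ∧ a (σ 3) = a 2) ∨
       (a (σ 0) = a 1 ∧ a (σ 1) = a 3 ∧ a (σ 2) = a 0 ∧ a (σ 3) = a 2) ∨
       (a (σ 0) = a 2 ∧ a (σ 1) = a 0 ∧ a (σ 2) = a 3 ∧ a (σ 3) = a 1) ∨
       (a (σ 0) = a 2 ∧ a (σ 1) = a 3 ∧ a (σ 2) = a 0 ∧ a (σ 3) = a 1))) := by
  have hne : ∀ j, a j ≠ 0 := fun j => (hpos j).ne'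
  have s0 : a 0 * a 3 = a (σ 0) * a (σ 3) := hsym 0
  have s1 : a 1 * a 2 = a (σ 1) * a (σ 2) := hsym 1
  have s0' := s0.trans (mul_comm _ _)
  have s1' := s1.trans (mul_comm _ _)
  have hinj : ∀ i j, i ≠ j → σ i ≠ σ j := fun i j => σ.injective.ne
  have d01 := hinj 0 1 (by decide); have d02 := hinj 0 2 (by decide)
  have d03 := hinj 0 3 (by decide); have d12 := hinj 1 2 (by decide)
  have d13 := hinj 1 3 (by decide); have d23 := hinj 2 3 (by decide)
  clear hsym hinj
  generalize σ 0 = i0 at *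
  generalize σ 1 = i1 at *
  generalize σ 2 = i2 at *
  generalize σ 3 = i3 at *
  -- all 24 permutations; cancelling positive digits turns the symmetry equations into equalities
  fin_cases i0 <;> fin_cases i1 <;> fin_cases i2 <;> fin_cases i3 <;>
    simp only [Fin.reduceFinMk, Fin.isValue] at * <;>
    simp at d01 d02 d03 d12 d13 d23 <;>
    (try simp only [mul_eq_mul_left_iff, mul_eq_mul_right_iff, hne, or_false] at s0 s0' s1 s1') <;>
    grind

theorem isPerfect_fin_four_iff {a : Fin 4 → ℕ} {σ : Equiv.Perm (Fin 4)} {k : ℕ} :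
    IsPerfect (n := 3) a σ k ↔
      a 0 = k * a (σ 0) ∧ a (σ 1) = k * a 1 ∧ a 2 = k * a (σ 2) ∧ a (σ 3) = k * a 3 := by
  refine ⟨fun h => ⟨(h 0).1 (by decide), (h 1).2 (by decide), (h 2).1 (by decide),
    (h 3).2 (by decide)⟩, fun ⟨h0, h1, h2, h3⟩ j => ?_⟩
  fin_cases j <;> simp [*, Nat.even_iff, Nat.odd_iff]

theorem forall_fin_four_apply_eq_rev_iff {a b : Fin 4 → ℕ} :
    (∀ j, b j = a j.rev) ↔ b 0 = a 3 ∧ b 1 = a 2 ∧ b 2 = a 1 ∧ b 3 = a 0 := by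
  refine ⟨fun h => ⟨h 0, h 1, h 2, h 3⟩, fun ⟨h0, h1, h2, h3⟩ j => ?_⟩
  fin_cases j <;> simpa

/-- A 4-digit `(σ,k)`-permutiple is symmetric iff it is perfect or its permuted
digit string is the reversal of its digit string (`a_{σ(j)} = a_{3−j}` for all `j`,
so that it is a `k`-reverse multiple). -/
theorem stmt15 (a : Fin 4 → ℕ) (σ : Equiv.Perm (Fin 4)) (k : ℕ)
    (h : IsPermutiple (n := 3) a σ k) :
    IsSymmetric (n := 3) a σ ↔
      (IsPerfect (n := 3) a σ k ∨ ∀ j : Fin 4, a (σ j) = a j.rev) := by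
  obtain ⟨d, e, rfl, hQ, hP⟩ := h.exists_cont_factor
  obtain ⟨hpos, -, hk, -⟩ := h
  simp only [List.ofFn_succ, List.ofFn_zero, Function.comp_apply, List.tail_cons, Fin.reduceSucc,
    Fin.succ_zero_eq_one, Fin.succ_one_eq_two] at hQ hP
  have hhead := mul_head_le_of_cont_eq (hpos 1) (hpos 3) hQ hP
  refine ⟨fun hsym => ?_, ?_⟩
  · have hlt : a (σ 0) < a 0 := by nlinarith [hpos (σ 0)]
    rw [isPerfect_fin_four_iff, forall_fin_four_apply_eq_rev_iff]
    rcases hsym.fin_four_cases hpos hlt with h | h | ⟨hS, h | h | h | h⟩ <;>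
      obtain ⟨e0, e1, e2, e3⟩ := h <;> simp only [e0, e1, e2, e3] at hQ hP hhead <;>
      rw [e0, e1, e2, e3]
    · exact Or.inr ⟨rfl, rfl, rfl, rfl⟩
    · have h12 := permutiple3120_middle_eq (hpos 1) (hpos 2) (hpos 3) hk hhead hQ hP
      exact Or.inr ⟨rfl, h12, h12.symm, rfl⟩
    · obtain ⟨h0, h2⟩ := permutiple1032_perfect (hpos 1) (hpos 2) (hpos 3) hk hhead hS hQ hP
      exact Or.inl ⟨h0, h0, h2, h2⟩
    · exact Or.inl (permutiple1302_perfect (hpos 1) (hpos 2) (hpos 3) hk hhead hS hQ hP)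
    · exact Or.inl (permutiple2031_perfect (hpos 1) (hpos 2) (hpos 3) hk hhead hS hQ hP)
    · exact (not_permutiple2301 (hpos 1) (hpos 2) (hpos 3) hk hhead hS hQ hP).elim
  · rintro (hperf | hrev)
    · exact hperf.isSymmetric ⟨1, rfl⟩
    · exact isSymmetric_of_apply_eq_rev hrev
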